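/- arXiv:2004.14160 — 5 statements merged into one kernel-verified Lean document; each statement's English description precedes it below -/
import Mathlib

section
/- For all natural numbers n and all real x, (x+1) * ∑_{k=0}^{n} C(n,k) * w_k(x) * w_{n-k}(x) = w_{n+1}(x) + w_n(x), where w_n(x) = ∑_{k=0}^{n} k! * S(n,k) * x^k are the geometric (ordered Bell) polynomials and S(n,k) denotes the Stirling numbers of the second kind. -/
open Finset

def stirling2 : ℕ → ℕ → ℕ
  | 0, 0 => 1
  | 0, _ + 1 => 0
  | _ + 1, 0 => 0
  | n + 1, k + 1 => (k + 1) * stirling2 n (k + 1) + stirling2 n k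

noncomputable def w (n : ℕ) (x : ℝ) : ℝ :=
  ∑ k ∈ range (n + 1), (k.factorial : ℝ) * (stirling2 n k : ℝ) * x ^ k

lemma stirling2_succ (n k : ℕ) :
    stirling2 (n + 1) (k + 1) = (k + 1) * stirling2 n (k + 1) + stirling2 n k := rfl

lemma stirling2_eq_zero : ∀ n k : ℕ, n < k → stirling2 n k = 0
  | 0, _ + 1, _ => rfl
  | n + 1, k + 1, h => by
    rw [stirling2_succ, stirling2_eq_zero n (k + 1) (by omega),
      stirling2_eq_zero n k (by omega)]
    ring

lemma w_extend (k m : ℕ) (hk : k ≤ m) (x : ℝ) :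
    w k x = ∑ i ∈ range (m + 1), (i.factorial : ℝ) * (stirling2 k i : ℝ) * x ^ i := by
  unfold w
  apply Finset.sum_subset
  · intro i hi
    simp only [mem_range] at *
    omega
  · intro i _ hni
    simp only [mem_range] at hni
    rw [stirling2_eq_zero k i (by omega)]
    simp

lemma conv_lemma (n : ℕ) : ∀ i j : ℕ,
    ∑ k ∈ range (n + 1), n.choose k * stirling2 k i * stirling2 (n - k) j
      = (i + j).choose i * stirling2 n (i + j) := by
  induction n with
  | zero =>
    intro i j
    cases i <;> cases j <;> simp [stirling2]
  | succ n ih =>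
    intro i j
    match i, j with
    | 0, j =>
      rw [Finset.sum_eq_single_of_mem 0 (by simp)]
      · simp [show stirling2 0 0 = 1 from rfl]
      · intro b _ hb0
        obtain ⟨b', rfl⟩ := Nat.exists_eq_succ_of_ne_zero hb0
        show (n + 1).choose (b' + 1) * stirling2 (b' + 1) 0 * _ = 0
        rw [show stirling2 (b' + 1) 0 = 0 from rfl]
        ring
    | i + 1, 0 =>
      rw [Finset.sum_eq_single_of_mem (n + 1) (by simp)]
      · simp [Nat.choose_self, show stirling2 0 0 = 1 from rfl]
      · intro b hb hbn
        simp only [mem_range] at hb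
        have h3 : n + 1 - b = (n - b) + 1 := by omega
        rw [h3, show stirling2 ((n - b) + 1) 0 = 0 from rfl]
        ring
    | i + 1, j + 1 =>
      have hsplit : ∑ k ∈ range (n + 2),
            (n + 1).choose k * stirling2 k (i + 1) * stirling2 (n + 1 - k) (j + 1)
          = (∑ k ∈ range (n + 1), n.choose k * stirling2 (k + 1) (i + 1) * stirling2 (n - k) (j + 1))
            + ∑ k ∈ range (n + 1), n.choose (k + 1) * stirling2 (k + 1) (i + 1) * stirling2 (n - k) (j + 1) := by
        rw [Finset.sum_range_succ']
        rw [show stirling2 0 (i + 1) = 0 from rfl]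
        rw [← Finset.sum_add_distrib]
        simp only [Nat.succ_sub_succ, mul_zero, zero_mul, add_zero]
        apply Finset.sum_congr rfl
        intro k _
        rw [Nat.choose_succ_succ, add_mul, add_mul]
      have hB : ∑ k ∈ range (n + 1), n.choose (k + 1) * stirling2 (k + 1) (i + 1) * stirling2 (n - k) (j + 1)
          = ∑ k ∈ range (n + 1), n.choose k * stirling2 k (i + 1) * stirling2 (n + 1 - k) (j + 1) := by
        have h1 := Finset.sum_range_succ'
          (fun k => n.choose k * stirling2 k (i + 1) * stirling2 (n + 1 - k) (j + 1)) (n + 1)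
        have h2 := Finset.sum_range_succ
          (fun k => n.choose k * stirling2 k (i + 1) * stirling2 (n + 1 - k) (j + 1)) (n + 1)
        simp only [Nat.succ_sub_succ, Nat.choose_succ_self, zero_mul,
          show stirling2 0 (i + 1) = 0 from rfl, mul_zero, add_zero] at h1 h2
        rw [← h1, h2]
      rw [hsplit, hB, ← Finset.sum_add_distrib]
      have hterm : ∀ k ∈ range (n + 1),
          n.choose k * stirling2 (k + 1) (i + 1) * stirling2 (n - k) (j + 1)
            + n.choose k * stirling2 k (i + 1) * stirling2 (n + 1 - k) (j + 1)
          = (i + 1) * (n.choose k * stirling2 k (i + 1) * stirling2 (n - k) (j + 1))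
            + n.choose k * stirling2 k i * stirling2 (n - k) (j + 1)
            + ((j + 1) * (n.choose k * stirling2 k (i + 1) * stirling2 (n - k) (j + 1))
              + n.choose k * stirling2 k (i + 1) * stirling2 (n - k) j) := by
        intro k hk
        simp only [mem_range] at hk
        have h3 : n + 1 - k = (n - k) + 1 := by omega
        rw [h3, stirling2_succ, stirling2_succ]
        ring
      rw [Finset.sum_congr rfl hterm]
      rw [Finset.sum_add_distrib, Finset.sum_add_distrib, Finset.sum_add_distrib,
        ← Finset.mul_sum, ← Finset.mul_sum]
      rw [ih (i + 1) (j + 1), ih i (j + 1), ih (i + 1) j]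
      have e1 : i + (j + 1) = i + j + 1 := by omega
      have e2 : i + 1 + j = i + j + 1 := by omega
      have e3 : i + 1 + (j + 1) = (i + j + 1) + 1 := by omega
      rw [e1, e2, e3, stirling2_succ n (i + j + 1),
        Nat.choose_succ_succ (i + j + 1) i]
      ring

lemma diag_sum (N : ℕ) (F : ℕ → ℝ) (hF : ∀ m, N ≤ m → F m = 0) :
    ∑ i ∈ range N, ∑ j ∈ range N, F (i + j) = ∑ m ∈ range N, ((m : ℝ) + 1) * F m := by
  have h1 : ∀ i ∈ range N, ∑ j ∈ range N, F (i + j) = ∑ j ∈ range (N - i), F (i + j) := by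
    intro i hi
    simp only [mem_range] at hi
    symm
    apply Finset.sum_subset
    · intro j hj
      simp only [mem_range] at *
      omega
    · intro j hj hj'
      simp only [mem_range] at *
      exact hF _ (by omega)
  rw [Finset.sum_congr rfl h1]
  have h2 := Finset.sum_range_diag_flip N (fun i j => F (i + j))
  rw [← h2]
  apply Finset.sum_congr rfl
  intro m hm
  have h3 : ∀ k ∈ range (m + 1), F (k + (m - k)) = F m := by
    intro k hk
    simp only [mem_range] at hk
    congr 1
    omega
  rw [Finset.sum_congr rfl h3, Finset.sum_const, card_range, nsmul_eq_mul]
  push_cast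
  ring

lemma convW (n : ℕ) (x : ℝ) :
    ∑ k ∈ range (n + 1), (n.choose k : ℝ) * w k x * w (n - k) x
      = ∑ m ∈ range (n + 1), ((m + 1).factorial : ℝ) * (stirling2 n m : ℝ) * x ^ m := by
  have step1 : ∀ k ∈ range (n + 1), (n.choose k : ℝ) * w k x * w (n - k) x
      = ∑ i ∈ range (n + 1), ∑ j ∈ range (n + 1),
          (n.choose k : ℝ) * ((i.factorial : ℝ) * (stirling2 k i : ℝ) * x ^ i)
            * ((j.factorial : ℝ) * (stirling2 (n - k) j : ℝ) * x ^ j) := by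
    intro k hk
    simp only [mem_range] at hk
    rw [w_extend k n (by omega) x, w_extend (n - k) n (by omega) x]
    rw [mul_assoc, Finset.sum_mul_sum, Finset.mul_sum]
    apply Finset.sum_congr rfl
    intro i _
    rw [Finset.mul_sum]
    apply Finset.sum_congr rfl
    intro j _
    ring
  rw [Finset.sum_congr rfl step1, Finset.sum_comm]
  have inner : ∀ i ∈ range (n + 1), ∑ k ∈ range (n + 1), ∑ j ∈ range (n + 1),
        (n.choose k : ℝ) * ((i.factorial : ℝ) * (stirling2 k i : ℝ) * x ^ i)
          * ((j.factorial : ℝ) * (stirling2 (n - k) j : ℝ) * x ^ j)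
      = ∑ j ∈ range (n + 1),
          ((i + j).factorial : ℝ) * (stirling2 n (i + j) : ℝ) * x ^ (i + j) := by
    intro i _
    rw [Finset.sum_comm]
    apply Finset.sum_congr rfl
    intro j _
    have hcast : ∑ k ∈ range (n + 1),
          (n.choose k : ℝ) * ((i.factorial : ℝ) * (stirling2 k i : ℝ) * x ^ i)
            * ((j.factorial : ℝ) * (stirling2 (n - k) j : ℝ) * x ^ j)
        = ((i.factorial * j.factorial : ℕ) : ℝ) * x ^ (i + j)
            * ((∑ k ∈ range (n + 1), n.choose k * stirling2 k i * stirling2 (n - k) j : ℕ) : ℝ) := by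
      push_cast
      rw [Finset.mul_sum]
      apply Finset.sum_congr rfl
      intro k _
      rw [pow_add]
      ring
    rw [hcast, conv_lemma n i j]
    have hfac : (i + j).choose i * (i.factorial * j.factorial) = (i + j).factorial := by
      have h := Nat.choose_mul_factorial_mul_factorial (Nat.le_add_right i j)
      rw [Nat.add_sub_cancel_left] at h
      rw [← h]
      ring
    rw [← hfac]
    push_cast
    ring
  rw [Finset.sum_congr rfl inner]
  have hF : ∀ m, n + 1 ≤ m →
      ((m.factorial : ℝ) * (stirling2 n m : ℝ) * x ^ m) = 0 := by
    intro m hm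
    rw [stirling2_eq_zero n m (by omega)]
    simp
  rw [diag_sum (n + 1) (fun m => (m.factorial : ℝ) * (stirling2 n m : ℝ) * x ^ m) hF]
  apply Finset.sum_congr rfl
  intro m _
  rw [Nat.factorial_succ]
  push_cast
  ring

theorem stmt0 (n : ℕ) (x : ℝ) :
    (x + 1) * ∑ k ∈ range (n + 1), (n.choose k : ℝ) * w k x * w (n - k) x
      = w (n + 1) x + w n x := by
  rw [convW]
  have hD : ∑ m ∈ range (n + 1), ((m + 1).factorial : ℝ) * (stirling2 n m : ℝ) * x ^ m
      = w n x + ∑ m ∈ range (n + 1), (m : ℝ) * (m.factorial : ℝ) * (stirling2 n m : ℝ) * x ^ m := by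
    unfold w
    rw [← Finset.sum_add_distrib]
    apply Finset.sum_congr rfl
    intro m _
    rw [Nat.factorial_succ]
    push_cast
    ring
  have hE : ∑ m ∈ range (n + 1),
        ((m : ℝ) + 1) * ((m + 1).factorial : ℝ) * (stirling2 n (m + 1) : ℝ) * x ^ (m + 1)
      = ∑ m ∈ range (n + 1), (m : ℝ) * (m.factorial : ℝ) * (stirling2 n m : ℝ) * x ^ m := by
    have h1 := Finset.sum_range_succ'
      (fun m => (m : ℝ) * (m.factorial : ℝ) * (stirling2 n m : ℝ) * x ^ m) (n + 1)
    have h2 := Finset.sum_range_succ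
      (fun m => (m : ℝ) * (m.factorial : ℝ) * (stirling2 n m : ℝ) * x ^ m) (n + 1)
    simp only [Nat.cast_zero, zero_mul, add_zero, stirling2_eq_zero n (n + 1) (by omega),
      mul_zero, zero_mul, Nat.cast_zero] at h1 h2
    rw [← h2, h1]
    apply Finset.sum_congr rfl
    intro m _
    push_cast
    ring
  have hW1 : w (n + 1) x
      = x * (∑ m ∈ range (n + 1), ((m + 1).factorial : ℝ) * (stirling2 n m : ℝ) * x ^ m)
        + ∑ m ∈ range (n + 1), (m : ℝ) * (m.factorial : ℝ) * (stirling2 n m : ℝ) * x ^ m := by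
    unfold w
    rw [Finset.sum_range_succ']
    rw [show stirling2 (n + 1) 0 = 0 from rfl]
    simp only [Nat.cast_zero, mul_zero, zero_mul, add_zero]
    rw [Finset.mul_sum, ← hE, ← Finset.sum_add_distrib]
    apply Finset.sum_congr rfl
    intro m _
    rw [stirling2_succ]
    push_cast
    ring
  rw [hW1, hD]
  ring
end

section
/- For all natural numbers n and all real numbers x₁ ≠ x₂, (x₂ - x₁) * ∑_{k=0}^{n} C(n,k) * w_k(x₁) * w_{n-k}(x₂) = x₂ * w_n(x₂) - x₁ * w_n(x₁), where w_n(x) = ∑_{k=0}^{n} k! * S(n,k) * x^k. -/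
open Finset

/-!
The exponential generating function `W_x(t) = ∑ wₙ(x) tⁿ / n!` satisfies `W_x (1 - x (eᵗ - 1)) = 1`:
coefficientwise this is the recurrence `w_{n+1}(x) = x ∑_{j ≤ n} C(n+1,j) w_j(x)`, which comes from
the recurrence `S(n+1,m+1) = ∑_j C(n,j) S(j,m)`. Binomial convolutions are products of exponential
generating functions, so the identity is the `n`-th coefficient of the partial fraction identity
`(x₂ - x₁) W_{x₁} W_{x₂} = x₂ W_{x₂} - x₁ W_{x₁}`.
-/

open PowerSeries

namespace Nat

theorem stirlingSecond_succ_succ_eq_sum_choose (n m : ℕ) :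
    stirlingSecond (n + 1) (m + 1) = ∑ j ∈ range (n + 1), n.choose j * stirlingSecond j m := by
  induction n generalizing m with
  | zero => cases m <;> rfl
  | succ n ih =>
    have shift : ∑ j ∈ range (n + 1), n.choose j * stirlingSecond (j + 1) m
        = m * stirlingSecond (n + 1) (m + 1) + stirlingSecond (n + 1) m := by
      cases m with
      | zero => simp
      | succ m =>
        have split (j : ℕ) : n.choose j * stirlingSecond (j + 1) (m + 1) =
            (m + 1) * (n.choose j * stirlingSecond j (m + 1)) + n.choose j * stirlingSecond j m := by
          rw [stirlingSecond_succ_succ]; ring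
        simp only [split, sum_add_distrib, ← mul_sum, ← ih]
    have pascal := sum_choose_succ_mul (R := ℕ) (fun j _ => stirlingSecond j m) n
    simp only [cast_id] at pascal
    rw [pascal, shift, ← ih, stirlingSecond_succ_succ (n + 1)]
    ring

theorem sum_choose_succ_mul_stirlingSecond (n m : ℕ) :
    ∑ j ∈ range (n + 1), (n + 1).choose j * stirlingSecond j m
      = (m + 1) * stirlingSecond (n + 1) (m + 1) := by
  have h := stirlingSecond_succ_succ_eq_sum_choose (n + 1) m
  rw [sum_range_succ, choose_self, one_mul, stirlingSecond_succ_succ (n + 1) m] at h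
  omega

end Nat

theorem stirling2_eq_stirlingSecond : ∀ n k, stirling2 n k = Nat.stirlingSecond n k
  | 0, 0 | 0, _ + 1 | _ + 1, 0 => rfl
  | n + 1, k + 1 => by
    rw [stirling2, Nat.stirlingSecond_succ_succ, stirling2_eq_stirlingSecond n (k + 1),
      stirling2_eq_stirlingSecond n k]

section GeometricPolynomial

open Nat

theorem w_eq_sum_range {n N : ℕ} (hN : n < N) (x : ℝ) :
    w n x = ∑ k ∈ range N, (k ! : ℝ) * stirlingSecond n k * x ^ k := by
  simp only [w, stirling2_eq_stirlingSecond]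
  refine sum_subset (range_subset_range.2 hN) fun k _ hk => ?_
  rw [stirlingSecond_eq_zero_of_lt (by simpa using hk), cast_zero, mul_zero, zero_mul]

theorem w_zero (x : ℝ) : w 0 x = 1 := by
  simp [w_eq_sum_range zero_lt_one]

theorem w_succ (n : ℕ) (x : ℝ) :
    w (n + 1) x = x * ∑ j ∈ range (n + 1), ((n + 1).choose j : ℝ) * w j x := by
  have hS (m : ℕ) : ∑ j ∈ range (n + 1), ((n + 1).choose j : ℝ) * stirlingSecond j m
      = (m + 1) * stirlingSecond (n + 1) (m + 1) := by
    exact_mod_cast sum_choose_succ_mul_stirlingSecond n m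
  calc w (n + 1) x
      = ∑ m ∈ range (n + 1), ((m + 1)! : ℝ) * stirlingSecond (n + 1) (m + 1) * x ^ (m + 1) := by
        rw [w_eq_sum_range (lt_add_one _), sum_range_succ']
        simp
    _ = x * ∑ m ∈ range (n + 1), (m ! : ℝ) * x ^ m *
          ∑ j ∈ range (n + 1), ((n + 1).choose j : ℝ) * stirlingSecond j m := by
        rw [mul_sum]
        refine sum_congr rfl fun m _ => ?_
        rw [hS, factorial_succ]
        push_cast
        ring
    _ = x * ∑ j ∈ range (n + 1), ((n + 1).choose j : ℝ) * w j x := by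
        congr 1
        simp_rw [mul_sum]
        rw [sum_comm]
        refine sum_congr rfl fun j hj => ?_
        rw [w_eq_sum_range (mem_range.1 hj), mul_sum]
        refine sum_congr rfl fun m _ => ?_
        ring

end GeometricPolynomial

section ExponentialGeneratingFunction

variable {K : Type*} [Field K]

noncomputable def egf (a : ℕ → K) : K⟦X⟧ := mk fun n => a n / n.factorial

@[simp] theorem coeff_egf (a : ℕ → K) (n : ℕ) : coeff n (egf a) = a n / n.factorial :=
  coeff_mk _ _

theorem egf_one [CharZero K] : egf (fun _ => (1 : K)) = exp K := by
  ext n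
  simp

theorem egf_mul_egf [CharZero K] (a b : ℕ → K) :
    egf a * egf b = egf fun n => ∑ k ∈ range (n + 1), (n.choose k : K) * a k * b (n - k) := by
  ext n
  rw [coeff_mul,
    Nat.sum_antidiagonal_eq_sum_range_succ (fun i j => coeff i (egf a) * coeff j (egf b)),
    coeff_egf, sum_div]
  refine sum_congr rfl fun k hk => ?_
  have : (n.factorial : K) ≠ 0 := Nat.cast_ne_zero.2 n.factorial_ne_zero
  rw [coeff_egf, coeff_egf, Nat.cast_choose K (mem_range_succ_iff.1 hk)]
  field_simp

end ExponentialGeneratingFunction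

theorem egf_w_mul_one_sub_eq_one (x : ℝ) :
    egf (w · x) * (1 - C x * (exp ℝ - 1)) = 1 := by
  rw [← egf_one]
  ext n
  simp only [mul_sub, mul_one, mul_left_comm _ (C x), egf_mul_egf, map_sub, coeff_C_mul, coeff_egf]
  cases n with
  | zero => simp [w_zero]
  | succ n =>
    simp only [w_succ, sum_range_succ, Nat.choose_succ_self_right, Nat.cast_add, Nat.cast_one,
      Nat.choose_self, one_mul, coeff_mul_C, coeff_egf, coeff_one, Nat.add_eq_zero_iff,
      one_ne_zero, and_false, ↓reduceIte]
    ring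

theorem stmt1_general (n : ℕ) (x₁ x₂ : ℝ) :
    (x₂ - x₁) * ∑ k ∈ range (n + 1), (n.choose k : ℝ) * w k x₁ * w (n - k) x₂
      = x₂ * w n x₂ - x₁ * w n x₁ := by
  set W₁ := egf (w · x₁)
  set W₂ := egf (w · x₂)
  have partial_fractions : (C x₂ - C x₁) * (W₁ * W₂) = C x₂ * W₂ - C x₁ * W₁ := by
    linear_combination (C x₂ * W₂) * egf_w_mul_one_sub_eq_one x₁
      - (C x₁ * W₁) * egf_w_mul_one_sub_eq_one x₂
  have coeff_n := congrArg (coeff n) partial_fractions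
  simp only [W₁, W₂, egf_mul_egf, sub_mul, map_sub, coeff_C_mul, coeff_egf] at coeff_n
  field_simp at coeff_n
  linear_combination coeff_n

theorem stmt1 (n : ℕ) (x₁ x₂ : ℝ) (h : x₁ ≠ x₂) :
    (x₂ - x₁) * ∑ k ∈ range (n + 1), (n.choose k : ℝ) * w k x₁ * w (n - k) x₂
      = x₂ * w n x₂ - x₁ * w n x₁ :=
  stmt1_general n x₁ x₂
end

section
/- For every natural number n and every real x with 2x+1 ≠ 0, w_n(x) = ∑_{k=0}^{n} S(n,k) * k! * x^k * (2^{n+1} * (x+1) * x^k + (-1)^{k+1}) / (2x+1)^{k+1}, where w_n(x) = ∑_{k=0}^{n} k! * S(n,k) * x^k. -/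
open Finset

open Polynomial

lemma st_zero : ∀ n k, n < k → stirling2 n k = 0
  | 0, _ + 1, _ => rfl
  | n + 1, k + 1, h => by
    have h1 := st_zero n (k+1) (by omega)
    have h2 := st_zero n k (by omega)
    simp [stirling2, h1, h2]

noncomputable def cc (n k : ℕ) : ℝ := (k.factorial : ℝ) * (stirling2 n k : ℝ)

lemma cc_rec (n k : ℕ) : cc (n+1) (k+1) = ((k:ℝ)+1) * (cc n (k+1) + cc n k) := by
  simp only [cc, stirling2, Nat.factorial_succ]
  push_cast
  ring

lemma cc_zero (n : ℕ) : cc (n+1) 0 = 0 := by simp [cc, stirling2]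

lemma cc_top (n : ℕ) : cc n (n+1) = 0 := by simp [cc, st_zero n (n+1) (by omega)]

lemma hXpow (k : ℕ) : X * derivative (X^k : ℝ[X]) = C (k:ℝ) * X^k := by
  cases k with
  | zero => simp
  | succ j =>
    rw [derivative_X_pow]
    push_cast
    ring

lemma hTpow (m : ℕ) : (2*X+1) * derivative ((2*X+1)^m : ℝ[X]) = C (2*(m:ℝ)) * (2*X+1)^m := by
  cases m with
  | zero => simp
  | succ j =>
    rw [derivative_pow]
    have hd : derivative (2*X+1 : ℝ[X]) = 2 := by simp
    rw [hd]
    simp only [Nat.add_sub_cancel]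
    rw [show (2*((j+1:ℕ):ℝ)) = ((j+1:ℕ):ℝ) * 2 from mul_comm _ _, C_mul, map_ofNat]
    ring

lemma perk (a b : ℝ[X]) (κ μ A e : ℝ)
    (h1 : X * derivative a = C κ * a)
    (h2 : (2*X+1) * derivative b = C μ * b) :
    X*(1+X)*(2*X+1) * derivative (a * (C A * (X+1) * a + C e) * b)
      + X*((2*X+1) - C (μ + κ*2 + 2) * (1+X)) * (a * (C A * (X+1) * a + C e) * b)
    = C κ * (a * (C (A*2) * (X+1) * a + C e) * (b*(2*X+1)))
      + C (κ + 1) * ((a*X) * (C (A*2) * (X+1) * (a*X) - C e) * b) := by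
  simp only [derivative_mul, derivative_add, derivative_C, derivative_X, derivative_one,
    C_add, C_mul, map_ofNat, C_1, zero_mul, mul_zero, zero_add, add_zero, mul_one]
  linear_combination ((1+X)*(2*X+1)*b*(C A * 2 *(X+1)*a + C e)) * h1
    + (X*(1+X)*a*(C A *(X+1)*a + C e)) * h2

noncomputable def Tm (n k : ℕ) : ℝ[X] :=
  X^k * (C ((2:ℝ)^(n+1)) * (X+1) * X^k + C ((-1:ℝ)^(k+1))) * (2*X+1)^(n-k)

noncomputable def wP (n : ℕ) : ℝ[X] := ∑ k ∈ range (n+1), C (cc n k) * X^k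

noncomputable def pP (n : ℕ) : ℝ[X] := ∑ k ∈ range (n+1), C (cc n k) * Tm n k

lemma perk' (n k : ℕ) (hk : k ≤ n) :
    X*(1+X)*(2*X+1) * derivative (Tm n k)
      + X*((2*X+1) - C (2*(n:ℝ)+2) * (1+X)) * Tm n k
    = C (k:ℝ) * Tm (n+1) k + C ((k:ℝ)+1) * Tm (n+1) (k+1) := by
  have hmain := perk (X^k) ((2*X+1)^(n-k)) (k:ℝ) (2*((n-k:ℕ):ℝ)) ((2:ℝ)^(n+1)) ((-1:ℝ)^(k+1))
    (hXpow k) (hTpow (n-k))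
  have hconst : 2*(n:ℝ)+2 = 2*((n-k:ℕ):ℝ) + (k:ℝ)*2 + 2 := by
    rw [Nat.cast_sub hk]; ring
  unfold Tm
  rw [Nat.succ_sub hk, Nat.succ_sub_succ, hconst]
  rw [show ((2:ℝ)^(n+1+1)) = (2:ℝ)^(n+1)*2 from pow_succ 2 (n+1)]
  rw [show ((-1:ℝ)^(k+1+1)) = -((-1:ℝ)^(k+1)) by rw [pow_succ]; ring]
  rw [map_neg]
  rw [show (X:ℝ[X])^(k+1) = X^k*X from pow_succ X k]
  rw [show ((2*X+1:ℝ[X]))^(n-k+1) = (2*X+1)^(n-k)*(2*X+1) from pow_succ _ _]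
  linear_combination hmain

lemma stepA (n : ℕ) :
    wP (n+1) = X*(1+X) * derivative (wP n) + X * wP n := by
  have hR : X*(1+X) * derivative (wP n) + X * wP n
      = (∑ k ∈ range (n+1), C ((k:ℝ) * cc n k) * X^k)
        + ∑ k ∈ range (n+1), C (((k:ℝ)+1) * cc n k) * X^(k+1) := by
    unfold wP
    rw [derivative_sum, Finset.mul_sum, Finset.mul_sum, ← Finset.sum_add_distrib,
      ← Finset.sum_add_distrib]
    refine sum_congr rfl fun k _ => ?_
    rw [derivative_C_mul]
    have h1 := hXpow k
    simp only [C_mul, C_add, C_1, pow_succ]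
    linear_combination (C (cc n k) * (1+X)) * h1
  rw [hR]
  have hfirst : ∑ k ∈ range (n+1), C ((k:ℝ) * cc n k) * X^k
      = ∑ k ∈ range (n+1), C (((k:ℝ)+1) * cc n (k+1)) * X^(k+1) := by
    have e1 := Finset.sum_range_succ' (fun k => C ((k:ℝ) * cc n k) * X^k) (n+1)
    have e2 := Finset.sum_range_succ (fun k => C ((k:ℝ) * cc n k) * X^k) (n+1)
    simp only [Nat.cast_zero, zero_mul, C_0, pow_zero, mul_one, add_zero] at e1
    rw [cc_top n] at e2
    simp only [mul_zero, C_0, zero_mul, add_zero] at e2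
    rw [← e2, e1]
    refine sum_congr rfl fun k _ => ?_
    push_cast
    ring_nf
  rw [hfirst, ← Finset.sum_add_distrib]
  unfold wP
  rw [Finset.sum_range_succ', cc_zero]
  simp only [C_0, zero_mul, add_zero]
  refine sum_congr rfl fun k _ => ?_
  rw [cc_rec]
  simp only [C_mul, C_add]
  ring

lemma stepB (n : ℕ) :
    pP (n+1) = X*(1+X)*(2*X+1) * derivative (pP n)
      + X*((2*X+1) - C (2*(n:ℝ)+2) * (1+X)) * pP n := by
  have hR : X*(1+X)*(2*X+1) * derivative (pP n)
        + X*((2*X+1) - C (2*(n:ℝ)+2) * (1+X)) * pP n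
      = (∑ k ∈ range (n+1), C ((k:ℝ) * cc n k) * Tm (n+1) k)
        + ∑ k ∈ range (n+1), C (((k:ℝ)+1) * cc n k) * Tm (n+1) (k+1) := by
    unfold pP
    rw [derivative_sum, Finset.mul_sum, Finset.mul_sum, ← Finset.sum_add_distrib,
      ← Finset.sum_add_distrib]
    refine sum_congr rfl fun k hk => ?_
    have hk' : k ≤ n := Nat.lt_succ_iff.mp (mem_range.mp hk)
    rw [derivative_C_mul]
    have h1 := perk' n k hk'
    simp only [C_mul, C_add, C_1, map_ofNat] at h1 ⊢
    linear_combination (C (cc n k)) * h1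
  rw [hR]
  have hfirst : ∑ k ∈ range (n+1), C ((k:ℝ) * cc n k) * Tm (n+1) k
      = ∑ k ∈ range (n+1), C (((k:ℝ)+1) * cc n (k+1)) * Tm (n+1) (k+1) := by
    have e1 := Finset.sum_range_succ' (fun k => C ((k:ℝ) * cc n k) * Tm (n+1) k) (n+1)
    have e2 := Finset.sum_range_succ (fun k => C ((k:ℝ) * cc n k) * Tm (n+1) k) (n+1)
    simp only [Nat.cast_zero, zero_mul, C_0, zero_mul] at e1
    rw [cc_top n] at e2
    simp only [mul_zero, C_0, zero_mul, add_zero] at e2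
    rw [← e2, e1]
    simp only [add_zero]
    refine sum_congr rfl fun k _ => ?_
    push_cast
    ring_nf
  rw [hfirst, ← Finset.sum_add_distrib]
  unfold pP
  rw [Finset.sum_range_succ', cc_zero]
  simp only [C_0, zero_mul, add_zero]
  refine sum_congr rfl fun k _ => ?_
  rw [cc_rec]
  simp only [C_mul, C_add]
  ring

lemma key : ∀ n : ℕ, wP n * (2*X+1)^(n+1) = pP n := by
  intro n
  induction n with
  | zero =>
    unfold wP pP Tm cc
    simp [stirling2, map_ofNat]
    ring
  | succ n ih =>
    have dih := congrArg derivative ih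
    rw [derivative_mul, derivative_pow] at dih
    have hd : derivative (2*X+1 : ℝ[X]) = 2 := by simp
    rw [hd] at dih
    simp only [Nat.add_sub_cancel] at dih
    push_cast at dih
    rw [stepA, stepB, ← dih, ← ih]
    rw [show (2*(n:ℝ)+2) = ((n:ℝ)+1)*2 by ring, C_mul, map_ofNat]
    ring

theorem stmt3 (n : ℕ) (x : ℝ) (h : 2 * x + 1 ≠ 0) :
    w n x = ∑ k ∈ range (n + 1),
      (stirling2 n k : ℝ) * (k.factorial : ℝ) * x ^ k *
        (2 ^ (n + 1) * (x + 1) * x ^ k + (-1) ^ (k + 1)) / (2 * x + 1) ^ (k + 1) := by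
  have hkey := congrArg (Polynomial.eval x) (key n)
  simp only [eval_mul, eval_add, eval_pow, eval_ofNat, eval_one, eval_X, eval_C,
    wP, pP, Tm, eval_finset_sum] at hkey
  have ht : (2*x+1)^(n+1) ≠ 0 := pow_ne_zero _ h
  have hw : w n x = (∑ k ∈ range (n+1),
      cc n k * (x^k * ((2:ℝ)^(n+1) * (x+1) * x^k + (-1:ℝ)^(k+1)) * (2*x+1)^(n-k)))
      / (2*x+1)^(n+1) := by
    rw [eq_div_iff ht, ← hkey]
    unfold w cc
    rw [Finset.sum_mul]
  rw [hw, Finset.sum_div]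
  refine sum_congr rfl fun k hk => ?_
  have hk' : k ≤ n := Nat.lt_succ_iff.mp (mem_range.mp hk)
  rw [div_eq_div_iff ht (pow_ne_zero _ h)]
  rw [show (2*x+1)^(n+1) = (2*x+1)^(n-k) * (2*x+1)^(k+1) by
    rw [← pow_add]; congr 1; omega]
  unfold cc
  ring
end

section
/- For all natural numbers n, 2 * ∑_{k=0}^{n} C(n,k) * (-1)^k * w_k = (-1)^n * w_n + 1 (as integers), where w_k = ∑_{j=0}^{k} j! * S(k,j) are the ordered Bell numbers. -/
/-!
Conditioning on the block that contains the last element gives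
`∑ k, C(n, k) S(k, j) = S(n + 1, j + 1)`, and with `(j + 1)! = (j + 1) j!` this yields the
recurrence `2 w_n = ∑ k, C(n, k) w_k + [n = 0]`. The claim is this recurrence read through
binomial inversion, which follows from Newton's forward-difference formula because the forward
difference of a binomial transform is the binomial transform of the shifted sequence.
-/

open Finset

def ob (n : ℕ) : ℕ := ∑ k ∈ range (n + 1), k.factorial * stirling2 n k

open Nat fwdDiff

theorem stirling2_eq_stirlingSecond_s8 : stirling2 = stirlingSecond := by
  funext n k
  induction n generalizing k with
  | zero => cases k <;> rfl
  | succ n ih => cases k <;> simp [stirling2, stirlingSecond_succ_succ, ih]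

theorem stirlingSecond_zero_right (n : ℕ) : stirlingSecond n 0 = if n = 0 then 1 else 0 := by
  cases n <;> rfl

theorem sum_choose_mul_stirlingSecond (n j : ℕ) :
    ∑ k ∈ range (n + 1), n.choose k * stirlingSecond k j = stirlingSecond (n + 1) (j + 1) := by
  induction n generalizing j with
  | zero => simp [stirlingSecond_succ_succ]
  | succ n ih =>
    have pascal := sum_choose_succ_mul (fun k _ ↦ stirlingSecond k j) n
    simp only [Nat.cast_id] at pascal
    rw [pascal, ih]
    cases j with
    | zero => simp [stirlingSecond_one_right]
    | succ j =>
      have shifted : ∑ k ∈ range (n + 1), n.choose k * stirlingSecond (k + 1) (j + 1) =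
          (j + 1) * stirlingSecond (n + 1) (j + 2) + stirlingSecond (n + 1) (j + 1) := by
        rw [← ih, ← ih, mul_sum, ← sum_add_distrib]
        exact sum_congr rfl fun k _ ↦ by rw [stirlingSecond_succ_succ]; ring
      rw [shifted, stirlingSecond_succ_succ (n + 1) (j + 1)]
      ring

theorem ob_eq_sum_range {n N : ℕ} (h : n ≤ N) :
    ob n = ∑ k ∈ range (N + 1), k ! * stirlingSecond n k := by
  rw [ob, stirling2_eq_stirlingSecond_s8]
  refine sum_subset (range_subset_range.2 (by omega)) fun k _ hk ↦ ?_
  rw [stirlingSecond_eq_zero_of_lt (by simpa using hk), mul_zero]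

theorem sum_choose_mul_ob (n : ℕ) :
    ∑ k ∈ range (n + 1), n.choose k * ob k + (if n = 0 then 1 else 0) = 2 * ob n := by
  have swap : ∑ k ∈ range (n + 1), n.choose k * ob k =
      ∑ j ∈ range (n + 1), j ! * stirlingSecond (n + 1) (j + 1) := by
    calc _ = ∑ k ∈ range (n + 1), ∑ j ∈ range (n + 1), n.choose k * (j ! * stirlingSecond k j) :=
          sum_congr rfl fun k hk ↦ by rw [ob_eq_sum_range (mem_range_succ_iff.1 hk), mul_sum]
      _ = ∑ j ∈ range (n + 1), j ! * ∑ k ∈ range (n + 1), n.choose k * stirlingSecond k j := by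
          rw [sum_comm]
          simp only [mul_sum, mul_left_comm]
      _ = _ := by simp only [sum_choose_mul_stirlingSecond]
  have split : ∀ j, j ! * stirlingSecond (n + 1) (j + 1) =
      (j + 1)! * stirlingSecond n (j + 1) + j ! * stirlingSecond n j := fun j ↦ by
    rw [stirlingSecond_succ_succ, factorial_succ]; ring
  have shift := sum_range_succ' (fun j ↦ j ! * stirlingSecond n j) (n + 1)
  rw [← ob_eq_sum_range (le_succ n), factorial_zero, one_mul, stirlingSecond_zero_right] at shift
  rw [swap, sum_congr rfl fun j _ ↦ split j, sum_add_distrib, add_right_comm, ← shift,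
    ← ob_eq_sum_range le_rfl]
  ring

section BinomialInversion

variable {G : Type*} [AddCommGroup G]

theorem fwdDiff_sum_choose_smul (a : ℕ → G) :
    Δ_[1] (fun n ↦ ∑ k ∈ range (n + 1), n.choose k • a k) =
      fun n ↦ ∑ k ∈ range (n + 1), n.choose k • a (k + 1) := by
  ext n
  rw [fwdDiff, sum_choose_succ_nsmul (fun k _ ↦ a k) n, add_sub_cancel_left]

theorem fwdDiff_iter_sum_choose_smul (a : ℕ → G) (m : ℕ) :
    Δ_[1] ^[m] (fun n ↦ ∑ k ∈ range (n + 1), n.choose k • a k) =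
      fun n ↦ ∑ k ∈ range (n + 1), n.choose k • a (k + m) := by
  induction m generalizing a with
  | zero => rfl
  | succ m ih =>
    rw [Function.iterate_succ_apply, fwdDiff_sum_choose_smul, ih]
    simp only [add_assoc]

theorem sum_neg_one_pow_choose_smul_sum_choose_smul (a : ℕ → G) (n : ℕ) :
    ∑ k ∈ range (n + 1), ((-1 : ℤ) ^ (n - k) * n.choose k) •
      ∑ j ∈ range (k + 1), k.choose j • a j = a n := by
  have newton :=
    fwdDiff_iter_eq_sum_shift (h := 1) (fun n ↦ ∑ k ∈ range (n + 1), n.choose k • a k) n 0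
  rw [fwdDiff_iter_sum_choose_smul] at newton
  simpa using newton.symm

end BinomialInversion

theorem sum_choose_mul_neg_one_pow_mul_sum_choose_mul {R : Type*} [CommRing R] (a : ℕ → R)
    (n : ℕ) :
    ∑ k ∈ range (n + 1), (n.choose k : R) * (-1) ^ k * ∑ j ∈ range (k + 1), (k.choose j : R) * a j =
      (-1) ^ n * a n := by
  rw [← sum_neg_one_pow_choose_smul_sum_choose_smul a n, mul_sum]
  refine sum_congr rfl fun k hk ↦ ?_
  have sign : (-1 : R) ^ n * (-1) ^ (n - k) = (-1) ^ k := by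
    obtain ⟨d, rfl⟩ := exists_add_of_le (mem_range_succ_iff.1 hk)
    rw [add_tsub_cancel_left, ← pow_add, add_assoc, pow_add, ← two_mul, pow_mul, neg_one_sq,
      one_pow, mul_one]
  simp only [zsmul_eq_mul, nsmul_eq_mul, Int.cast_mul, Int.cast_pow, Int.cast_neg, Int.cast_one,
    Int.cast_natCast]
  rw [← sign]
  ring

theorem stmt8 (n : ℕ) :
    2 * ∑ k ∈ range (n + 1), (n.choose k : ℤ) * (-1) ^ k * (ob k : ℤ)
      = (-1) ^ n * (ob n : ℤ) + 1 := by
  have recurrence (k : ℕ) :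
      ∑ j ∈ range (k + 1), (k.choose j : ℤ) * ob j = 2 * ob k - if k = 0 then 1 else 0 := by
    have cast := congrArg (Nat.cast : ℕ → ℤ) (sum_choose_mul_ob k)
    push_cast at cast
    linarith
  calc _ = ∑ k ∈ range (n + 1), (n.choose k : ℤ) * (-1) ^ k * (2 * ob k - if k = 0 then 1 else 0)
        + ∑ k ∈ range (n + 1), (n.choose k : ℤ) * (-1) ^ k * if k = 0 then 1 else 0 := by
        rw [mul_sum, ← sum_add_distrib]
        exact sum_congr rfl fun k _ ↦ by ring
    _ = _ := by
        simp_rw [← recurrence]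
        rw [sum_choose_mul_neg_one_pow_mul_sum_choose_mul]
        simp
end

section
/- Let F̃_{m,a}(n;x) = ∑_{k=0}^{n} C(n,k) * m^k * w_k(x/m) * (-a)^{n-k} with m ≠ 0. Then for all natural n and real m ≠ 0, a, x: F̃_{m,a}(n; x-m) = (-1)^n * F̃_{m,-a-m}(n; -x). -/
open Finset

noncomputable def Ft (m a : ℝ) (n : ℕ) (x : ℝ) : ℝ :=
  ∑ k ∈ range (n + 1), (n.choose k : ℝ) * m ^ k * w k (x / m) * (-a) ^ (n - k)

/-
The polynomials `W k := ∑ j! S(k, j) X^j` (so `w k = eval · (W k)`) satisfy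
`W (k + 1) = X ((1 + X) W k)'`. Substituting `X - 1`, resp. `-X`, conjugates this recursion
operator into `-(1 + A)`, resp. `A`, where `A p = X ((1 - X) p)'`; expanding `(1 + A)^k`
binomially gives `w k (y - 1) = (-1)^k ∑ j, C(k, j) w j (-y)`.

Umbrally, let `L_y` be the linear functional `X^k ↦ w k y` on `ℝ[X]`. Then
`Ft m a n x = L_{x/m} ((m X - a)^n)`, the identity above reads
`L_{y-1} p = L_{-y} (p ∘ (-1 - X))`, and `(m (-1 - X) - a)^n = (-1)^n (m X + a + m)^n`.
-/

open Polynomial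

lemma stirling2_eq_zero_of_lt : ∀ {n k : ℕ}, n < k → stirling2 n k = 0
  | 0, _ + 1, _ => rfl
  | _ + 1, _ + 1, h => by
      rw [stirling2, stirling2_eq_zero_of_lt (by omega), stirling2_eq_zero_of_lt (by omega)]
      simp

section FubiniPolynomial

variable (R : Type*) [CommRing R]

noncomputable def fubiniPoly (n : ℕ) : R[X] :=
  ∑ j ∈ range (n + 1), C ((j.factorial : R) * stirling2 n j) * X ^ j

noncomputable def fubiniStep : Module.End R R[X] :=
  LinearMap.mulLeft R X * derivative * LinearMap.mulLeft R (1 + X)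

noncomputable def reflectedFubiniStep : Module.End R R[X] :=
  LinearMap.mulLeft R X * derivative * LinearMap.mulLeft R (1 - X)

variable {R}

lemma coeff_fubiniPoly (n j : ℕ) :
    (fubiniPoly R n).coeff j = (j.factorial : R) * stirling2 n j := by
  rw [fubiniPoly, finsetSum_coeff]
  simp only [coeff_C_mul, coeff_X_pow, mul_ite, mul_one, mul_zero, sum_ite_eq, mem_range]
  split_ifs with hj
  · rfl
  · rw [stirling2_eq_zero_of_lt (by omega), Nat.cast_zero, mul_zero]

lemma fubiniPoly_succ (n : ℕ) : fubiniPoly R (n + 1) = fubiniStep R (fubiniPoly R n) := by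
  ext (_ | j)
  · simp [fubiniStep, coeff_fubiniPoly, mul_coeff_zero, stirling2]
  · simp only [fubiniStep, Module.End.mul_apply, LinearMap.mulLeft_apply, coeff_X_mul,
      coeff_derivative, add_mul, one_mul, coeff_add, coeff_fubiniPoly, stirling2,
      Nat.factorial_succ]
    push_cast
    ring

lemma fubiniPoly_eq_pow_apply_one (n : ℕ) : fubiniPoly R n = (fubiniStep R ^ n) 1 := by
  induction n with
  | zero => simp [fubiniPoly, stirling2]
  | succ n ih => rw [fubiniPoly_succ, ih, pow_succ', Module.End.mul_apply]

lemma semiconjBy_aeval_X_sub_one_fubiniStep :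
    SemiconjBy (aeval (X - 1 : R[X])).toLinearMap (fubiniStep R)
      (-(1 + reflectedFubiniStep R)) := by
  refine LinearMap.ext fun p => ?_
  simp [fubiniStep, reflectedFubiniStep, ← comp_eq_aeval, derivative_comp, derivative_mul]
  ring

lemma semiconjBy_aeval_neg_X_fubiniStep :
    SemiconjBy (aeval (-X : R[X])).toLinearMap (fubiniStep R) (reflectedFubiniStep R) := by
  refine LinearMap.ext fun p => ?_
  simp [fubiniStep, reflectedFubiniStep, ← comp_eq_aeval, derivative_comp, derivative_mul]
  ring

lemma fubiniPoly_comp_X_sub_one (n : ℕ) :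
    (fubiniPoly R n).comp (X - 1) =
      (-1 : R) ^ n • ∑ k ∈ range (n + 1), n.choose k • (fubiniPoly R k).comp (-X) := by
  have hsub := LinearMap.congr_fun
    ((semiconjBy_aeval_X_sub_one_fubiniStep (R := R)).pow_right n).eq 1
  have hneg (k : ℕ) := LinearMap.congr_fun
    ((semiconjBy_aeval_neg_X_fubiniStep (R := R)).pow_right k).eq 1
  simp only [Module.End.mul_apply, AlgHom.toLinearMap_apply, map_one,
    ← fubiniPoly_eq_pow_apply_one] at hsub hneg
  rw [comp_eq_aeval, hsub, ← neg_one_smul R (1 + _), _root_.smul_pow, add_comm 1,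
    (Commute.one_right _).add_pow]
  simp only [LinearMap.smul_apply, LinearMap.coe_sum, Finset.sum_apply, one_pow, mul_one,
    Module.End.mul_apply, Module.End.natCast_apply, map_nsmul, comp_eq_aeval, hneg]

end FubiniPolynomial

lemma eval_fubiniPoly (n : ℕ) (y : ℝ) : (fubiniPoly ℝ n).eval y = w n y := by
  simp [fubiniPoly, w, eval_finsetSum]

lemma w_sub_one (k : ℕ) (y : ℝ) :
    w k (y - 1) = (-1) ^ k * ∑ j ∈ range (k + 1), (k.choose j : ℝ) * w j (-y) := by
  simpa [← eval_fubiniPoly, eval_finsetSum] using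
    congr_arg (eval y) (fubiniPoly_comp_X_sub_one (R := ℝ) k)

noncomputable def fubiniFunctional (y : ℝ) : ℝ[X] →ₗ[ℝ] ℝ :=
  lsum fun k => LinearMap.mulRight ℝ (w k y)

lemma fubiniFunctional_C_mul_X_pow (y c : ℝ) (k : ℕ) :
    fubiniFunctional y (C c * X ^ k) = c * w k y := by
  simp [fubiniFunctional, C_mul_X_pow_eq_monomial]

lemma fubiniFunctional_X_pow (y : ℝ) (k : ℕ) : fubiniFunctional y (X ^ k) = w k y := by
  simpa using fubiniFunctional_C_mul_X_pow y 1 k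

lemma Ft_eq_fubiniFunctional (m a x : ℝ) (n : ℕ) :
    Ft m a n x = fubiniFunctional (x / m) ((C m * X - C a) ^ n) := by
  rw [sub_eq_add_neg, add_pow, map_sum, Ft]
  refine sum_congr rfl fun k _ => ?_
  rw [← map_neg, mul_pow, ← map_pow, ← map_pow, ← map_natCast C,
    show C (m ^ k) * X ^ k * C ((-a) ^ (n - k)) * C (n.choose k : ℝ)
      = C (n.choose k * m ^ k * (-a) ^ (n - k)) * X ^ k by simp only [map_mul]; ring,
    fubiniFunctional_C_mul_X_pow]
  ring

lemma fubiniFunctional_sub_one (y : ℝ) (p : ℝ[X]) :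
    fubiniFunctional (y - 1) p = fubiniFunctional (-y) (p.comp (-1 - X)) := by
  suffices fubiniFunctional (y - 1) = fubiniFunctional (-y) ∘ₗ (aeval (-1 - X)).toLinearMap from
    LinearMap.congr_fun this p
  ext k
  have hexpand :
      (-1 - X : ℝ[X]) ^ k = ∑ j ∈ range (k + 1), C ((-1 : ℝ) ^ k * k.choose j) * X ^ j := by
    rw [show (-1 - X : ℝ[X]) = C (-1) * (X + 1) by simp; ring, mul_pow, add_pow, mul_sum]
    refine sum_congr rfl fun j _ => ?_
    simp only [one_pow, mul_one, map_mul, map_pow, map_natCast]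
    ring
  simp only [LinearMap.comp_apply, AlgHom.toLinearMap_apply, ← C_mul_X_pow_eq_monomial, C_1,
    one_mul, map_pow, aeval_X]
  rw [fubiniFunctional_X_pow, hexpand, map_sum, w_sub_one, mul_sum]
  simp only [fubiniFunctional_C_mul_X_pow, mul_assoc]

theorem stmt12 (n : ℕ) (m a x : ℝ) (hm : m ≠ 0) :
    Ft m a n (x - m) = (-1) ^ n * Ft m (-a - m) n (-x) := by
  have hshift : (x - m) / m = x / m - 1 := by field_simp
  have hreflect : (C m * X - C a).comp (-1 - X) = C (-1) * (C m * X - C (-a - m)) := by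
    simp only [sub_comp, mul_comp, C_comp, X_comp, map_sub, map_neg, C_1]
    ring
  rw [Ft_eq_fubiniFunctional, Ft_eq_fubiniFunctional, hshift, neg_div, fubiniFunctional_sub_one,
    pow_comp, hreflect, mul_pow, ← map_pow, ← smul_eq_C_mul, map_smul, smul_eq_mul]
end
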